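/- Small model property of EPR: every satisfiable EPR sentence — an ∃*∀* prenex sentence over a relational vocabulary (constants and relation symbols, no function symbols) — has a finite model whose cardinality is at most the number of its constant symbols plus the number of its existential quantifiers (and at least one). -/

import Mathlib

namespace BH

/-- A first-order signature: function symbols (the 0-ary ones are the constants)
and relation symbols, each with an arity. -/
structure Sig where
  Func : Type
  funcArity : Func → ℕ
  Rel : Type
  relArity : Rel → ℕ

/-- A relational vocabulary: no proper function symbols,
i.e. every function symbol is a constant. -/
def Sig.Relational (S : Sig) : Prop := ∀ f, S.funcArity f = 0

/-- The two-vocabulary signature `Σ ⊎ Σ'`; `(s, false)` is the unprimed copy of the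
symbol `s` and `(s, true)` is its primed copy. -/
def Sig.double (S : Sig) : Sig where
  Func := S.Func × Bool
  funcArity := fun p => S.funcArity p.1
  Rel := S.Rel × Bool
  relArity := fun p => S.relArity p.1

/-- `Σ̂ = Σ ∪ {r}` where `r` (represented by `none`) is a fresh `a`-ary relation symbol. -/
def Sig.addRel (S : Sig) (a : ℕ) : Sig where
  Func := S.Func
  funcArity := S.funcArity
  Rel := Option S.Rel
  relArity := fun r => Option.elim r a S.relArity

/-- `Σ` extended with countably many fresh Skolem function symbols:
`(i, n)` is the `i`-th Skolem symbol, of arity `n`. -/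
def Sig.skolemize (S : Sig) : Sig where
  Func := S.Func ⊕ (ℕ × ℕ)
  funcArity := Sum.elim S.funcArity Prod.snd
  Rel := S.Rel
  relArity := S.relArity

/-- First-order terms over `S`, with variables indexed by `ℕ`. -/
inductive Term (S : Sig) : Type
  | var : ℕ → Term S
  | app : (f : S.Func) → (Fin (S.funcArity f) → Term S) → Term S

/-- First-order formulas (with equality) over `S`. -/
inductive Formula (S : Sig) : Type
  | rel : (r : S.Rel) → (Fin (S.relArity r) → Term S) → Formula S
  | eq : Term S → Term S → Formula S
  | fls : Formula S
  | not : Formula S → Formula S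
  | and : Formula S → Formula S → Formula S
  | or : Formula S → Formula S → Formula S
  | all : ℕ → Formula S → Formula S
  | ex : ℕ → Formula S → Formula S

variable {S : Sig}

def Formula.imp (φ ψ : Formula S) : Formula S := .or (.not φ) ψ

def Formula.iff (φ ψ : Formula S) : Formula S := .and (φ.imp ψ) (ψ.imp φ)

/-- A structure (model) for the signature `S`: a nonempty domain together with
interpretations of the function and relation symbols. -/
structure Struc (S : Sig) where
  Dom : Type
  [dom_nonempty : Nonempty Dom]
  interpFunc : (f : S.Func) → (Fin (S.funcArity f) → Dom) → Dom
  interpRel : (r : S.Rel) → (Fin (S.relArity r) → Dom) → Prop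

attribute [instance] Struc.dom_nonempty

def Term.eval (A : Struc S) (v : ℕ → A.Dom) : Term S → A.Dom
  | .var n => v n
  | .app f ts => A.interpFunc f fun i => Term.eval A v (ts i)

/-- Tarskian satisfaction. -/
def Formula.Realize (A : Struc S) (v : ℕ → A.Dom) : Formula S → Prop
  | .rel r ts => A.interpRel r fun i => (ts i).eval A v
  | .eq t u => t.eval A v = u.eval A v
  | .fls => False
  | .not φ => ¬ Formula.Realize A v φ
  | .and φ ψ => Formula.Realize A v φ ∧ Formula.Realize A v ψ
  | .or φ ψ => Formula.Realize A v φ ∨ Formula.Realize A v ψ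
  | .all x φ => ∀ d : A.Dom, Formula.Realize A (Function.update v x d) φ
  | .ex x φ => ∃ d : A.Dom, Formula.Realize A (Function.update v x d) φ

def Term.fvars : Term S → Set ℕ
  | .var n => {n}
  | .app _ ts => ⋃ i, Term.fvars (ts i)

def Formula.fvars : Formula S → Set ℕ
  | .rel _ ts => ⋃ i, (ts i).fvars
  | .eq t u => t.fvars ∪ u.fvars
  | .fls => ∅
  | .not φ => Formula.fvars φ
  | .and φ ψ => Formula.fvars φ ∪ Formula.fvars ψ
  | .or φ ψ => Formula.fvars φ ∪ Formula.fvars ψ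
  | .all x φ => Formula.fvars φ \ {x}
  | .ex x φ => Formula.fvars φ \ {x}

/-- A sentence is a closed formula. -/
def Formula.IsSentence (φ : Formula S) : Prop := φ.fvars = ∅

/-- Validity over all (finite and infinite) structures. -/
def Valid (φ : Formula S) : Prop := ∀ (A : Struc S) (v : ℕ → A.Dom), φ.Realize A v

def Satisfiable (φ : Formula S) : Prop := ∃ (A : Struc S) (v : ℕ → A.Dom), φ.Realize A v

def SetSatisfiable (Γ : Set (Formula S)) : Prop :=
  ∃ (A : Struc S) (v : ℕ → A.Dom), ∀ φ ∈ Γ, φ.Realize A v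

/-- Quantifier-free formulas. -/
inductive Formula.IsQF : Formula S → Prop
  | rel : ∀ r ts, IsQF (.rel r ts)
  | eq : ∀ t u, IsQF (.eq t u)
  | fls : IsQF .fls
  | not : ∀ {φ}, IsQF φ → IsQF (.not φ)
  | and : ∀ {φ ψ}, IsQF φ → IsQF ψ → IsQF (.and φ ψ)
  | or : ∀ {φ ψ}, IsQF φ → IsQF ψ → IsQF (.or φ ψ)

/-- Universal (`∀*` prenex) formulas. -/
inductive Formula.IsUniversal : Formula S → Prop
  | of_qf : ∀ {φ}, Formula.IsQF φ → IsUniversal φ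
  | all : ∀ (x) {φ}, IsUniversal φ → IsUniversal (.all x φ)

/-- Existential (`∃*` prenex) formulas. -/
inductive Formula.IsExistential : Formula S → Prop
  | of_qf : ∀ {φ}, Formula.IsQF φ → IsExistential φ
  | ex : ∀ (x) {φ}, IsExistential φ → IsExistential (.ex x φ)

/-- `∃*∀*` prenex formulas (the EPR class, over a relational signature). -/
inductive Formula.IsEA : Formula S → Prop
  | of_universal : ∀ {φ}, Formula.IsUniversal φ → IsEA φ
  | ex : ∀ (x) {φ}, IsEA φ → IsEA (.ex x φ)

/-- `∀*∃*` prenex formulas. -/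
inductive Formula.IsAE : Formula S → Prop
  | of_existential : ∀ {φ}, Formula.IsExistential φ → IsAE φ
  | all : ∀ (x) {φ}, IsAE φ → IsAE (.all x φ)

/-- Alternation-free formulas: Boolean combinations of universal and existential formulas. -/
inductive Formula.IsAF : Formula S → Prop
  | of_universal : ∀ {φ}, Formula.IsUniversal φ → IsAF φ
  | of_existential : ∀ {φ}, Formula.IsExistential φ → IsAF φ
  | not : ∀ {φ}, IsAF φ → IsAF (.not φ)
  | and : ∀ {φ ψ}, IsAF φ → IsAF ψ → IsAF (.and φ ψ)
  | or : ∀ {φ ψ}, IsAF φ → IsAF ψ → IsAF (.or φ ψ)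

/-- Embed a term over `Σ` as a term over `Σ ⊎ Σ'` using the copy indicated by `b`
(`false` = unprimed, `true` = primed). -/
def Term.toDouble (b : Bool) : Term S → Term S.double
  | .var n => .var n
  | .app f ts => .app (f, b) fun i => Term.toDouble b (ts i)

/-- Embed a formula over `Σ` as a formula over `Σ ⊎ Σ'` using the copy indicated by `b`;
`φ.toDouble true` is the primed copy `φ'`. -/
def Formula.toDouble (b : Bool) : Formula S → Formula S.double
  | .rel r ts => .rel (r, b) fun i => (ts i).toDouble b
  | .eq t u => .eq (t.toDouble b) (u.toDouble b)
  | .fls => .fls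
  | .not φ => .not (Formula.toDouble b φ)
  | .and φ ψ => .and (Formula.toDouble b φ) (Formula.toDouble b ψ)
  | .or φ ψ => .or (Formula.toDouble b φ) (Formula.toDouble b ψ)
  | .all x φ => .all x (Formula.toDouble b φ)
  | .ex x φ => .ex x (Formula.toDouble b φ)

/-- `I` is an inductive invariant for the transition relation `δ` iff `I ∧ δ → I'`
is valid over all (finite and infinite) structures. -/
def InductiveInvariant (δ : Formula S.double) (I : Formula S) : Prop :=
  Valid (Formula.imp (Formula.and (I.toDouble false) δ) (I.toDouble true))

/-- `I` is an inductive invariant for `δ` over finite structures iff `I ∧ δ → I'`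
is valid over all finite structures. -/
def InductiveInvariantFin (δ : Formula S.double) (I : Formula S) : Prop :=
  ∀ (A : Struc S.double), Finite A.Dom → ∀ v : ℕ → A.Dom,
    (Formula.imp (Formula.and (I.toDouble false) δ) (I.toDouble true)).Realize A v

def Term.substEnv (σ : ℕ → Term S) : Term S → Term S
  | .var n => σ n
  | .app f ts => .app f fun i => Term.substEnv σ (ts i)

/-- Capture-naive simultaneous substitution of terms for free variables. -/
def Formula.substEnv (σ : ℕ → Term S) : Formula S → Formula S
  | .rel r ts => .rel r fun i => (ts i).substEnv σ
  | .eq t u => .eq (t.substEnv σ) (u.substEnv σ)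
  | .fls => .fls
  | .not φ => .not (Formula.substEnv σ φ)
  | .and φ ψ => .and (Formula.substEnv σ φ) (Formula.substEnv σ ψ)
  | .or φ ψ => .or (Formula.substEnv σ φ) (Formula.substEnv σ ψ)
  | .all x φ => .all x (Formula.substEnv (Function.update σ x (.var x)) φ)
  | .ex x φ => .ex x (Formula.substEnv (Function.update σ x (.var x)) φ)

/-- Substitution of the term `t` for the variable `x`. -/
def Formula.substVar (x : ℕ) (t : Term S) (φ : Formula S) : Formula S :=
  φ.substEnv (Function.update Term.var x t)

mutual
  /-- Negation normal form. -/
  def Formula.nnf : Formula S → Formula S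
    | .rel r ts => .rel r ts
    | .eq t u => .eq t u
    | .fls => .fls
    | .not φ => Formula.nnfNeg φ
    | .and φ ψ => .and (Formula.nnf φ) (Formula.nnf ψ)
    | .or φ ψ => .or (Formula.nnf φ) (Formula.nnf ψ)
    | .all x φ => .all x (Formula.nnf φ)
    | .ex x φ => .ex x (Formula.nnf φ)

  /-- Negation normal form of the negation of a formula. -/
  def Formula.nnfNeg : Formula S → Formula S
    | .rel r ts => .not (.rel r ts)
    | .eq t u => .not (.eq t u)
    | .fls => .not .fls
    | .not φ => Formula.nnf φ
    | .and φ ψ => .or (Formula.nnfNeg φ) (Formula.nnfNeg ψ)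
    | .or φ ψ => .and (Formula.nnfNeg φ) (Formula.nnfNeg ψ)
    | .all x φ => .ex x (Formula.nnfNeg φ)
    | .ex x φ => .all x (Formula.nnfNeg φ)
end

/-- Embed a term over `Σ` into the Skolem-extended signature, while substituting
terms of the extended signature for its variables. -/
def Term.substSk (σ : ℕ → Term S.skolemize) : Term S → Term S.skolemize
  | .var n => σ n
  | .app f ts => .app (Sum.inl f) fun i => Term.substSk σ (ts i)

/-- The Skolemization worker.  `skolemAux φ c u env` Skolemizes the (NNF) formula `φ`,
where `c` is the index of the next fresh Skolem symbol, `u` is the list of universally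
quantified variables currently in scope, and `env` maps each existentially quantified
variable in scope to its Skolem term (and every other variable to itself).
It returns the Skolemized formula together with the next fresh Skolem index. -/
def skolemAux : Formula S → ℕ → List ℕ → (ℕ → Term S.skolemize) → Formula S.skolemize × ℕ
  | .rel r ts, c, _, env => (.rel r fun i => (ts i).substSk env, c)
  | .eq t u, c, _, env => (.eq (t.substSk env) (u.substSk env), c)
  | .fls, c, _, _ => (.fls, c)
  | .not φ, c, u, env =>
      let p := skolemAux φ c u env
      (.not p.1, p.2)
  | .and φ ψ, c, u, env =>
      let p := skolemAux φ c u env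
      let q := skolemAux ψ p.2 u env
      (.and p.1 q.1, q.2)
  | .or φ ψ, c, u, env =>
      let p := skolemAux φ c u env
      let q := skolemAux ψ p.2 u env
      (.or p.1 q.1, q.2)
  | .all x φ, c, u, env =>
      let p := skolemAux φ c (u ++ [x]) (Function.update env x (.var x))
      (.all x p.1, p.2)
  | .ex y φ, c, u, env =>
      skolemAux φ (c + 1) u
        (Function.update env y (.app (Sum.inr (c, u.length)) fun i => .var (u.get i)))

/-- Skolemization of `φ`, using fresh Skolem symbols starting from index `c`:
the universal formula over the Skolem-extended signature obtained from the negation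
normal form of `φ` by replacing each existentially quantified variable by a fresh Skolem
function applied to the universally quantified variables in whose scope it lies. -/
def Formula.skFrom (c : ℕ) (φ : Formula S) : Formula S.skolemize :=
  (skolemAux φ.nnf c [] Term.var).1

/-- The next fresh Skolem index after Skolemizing `φ` starting from index `c`. -/
def Formula.skCounter (c : ℕ) (φ : Formula S) : ℕ :=
  (skolemAux φ.nnf c [] Term.var).2

/-- Skolemization `Sk(φ)` of `φ`. -/
def Formula.sk (φ : Formula S) : Formula S.skolemize := φ.skFrom 0

def Term.IsGround : Term S → Prop
  | .var _ => False
  | .app _ ts => ∀ i, Term.IsGround (ts i)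

/-- Function-nesting depth of a term: constants have depth 0. -/
def Term.depth : Term S → ℕ
  | .var _ => 0
  | .app _ ts => Finset.univ.sup fun i => Term.depth (ts i) + 1

/-- The maximal depth of a term occurring in a formula; for an instantiation `φ[t̄]`
(a ground formula) this is the least `k` such that every ground term occurring in it
lies in `Terms_k`. -/
def Formula.tDepth : Formula S → ℕ
  | .rel _ ts => Finset.univ.sup fun i => (ts i).depth
  | .eq t u => max t.depth u.depth
  | .fls => 0
  | .not φ => Formula.tDepth φ
  | .and φ ψ => max (Formula.tDepth φ) (Formula.tDepth ψ)
  | .or φ ψ => max (Formula.tDepth φ) (Formula.tDepth ψ)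
  | .all _ φ => Formula.tDepth φ
  | .ex _ φ => Formula.tDepth φ

/-- `BInst k φ χ` holds iff `χ` is an instantiation `φ[t̄]` of the universal formula `φ`
by a tuple `t̄` of ground terms of depth at most `k` (`t̄ ∈ Terms_k`): each universally
quantified variable is replaced by a ground term and the quantifier is removed. -/
inductive BInst (k : ℕ) : Formula S → Formula S → Prop
  | rel : ∀ r ts, BInst k (.rel r ts) (.rel r ts)
  | eq : ∀ t u, BInst k (.eq t u) (.eq t u)
  | fls : BInst k .fls .fls
  | not : ∀ {φ χ}, BInst k φ χ → BInst k (.not φ) (.not χ)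
  | and : ∀ {φ₁ φ₂ χ₁ χ₂}, BInst k φ₁ χ₁ → BInst k φ₂ χ₂ →
      BInst k (.and φ₁ φ₂) (.and χ₁ χ₂)
  | or : ∀ {φ₁ φ₂ χ₁ χ₂}, BInst k φ₁ χ₁ → BInst k φ₂ χ₂ →
      BInst k (.or φ₁ φ₂) (.or χ₁ χ₂)
  | all : ∀ (x) {φ χ} (t : Term S), t.IsGround → t.depth ≤ k →
      BInst k (φ.substVar x t) χ → BInst k (.all x φ) χ

/-- `Ind = Sk(I) ∧ Sk(δ) ∧ Sk(¬I')`, with fresh Skolem symbols for each conjunct. -/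
def IndOf (I : Formula S) (δ : Formula S.double) : Formula S.double.skolemize :=
  Formula.and (Formula.skFrom 0 (I.toDouble false))
    (Formula.and
      (Formula.skFrom (Formula.skCounter 0 (I.toDouble false)) δ)
      (Formula.skFrom (Formula.skCounter (Formula.skCounter 0 (I.toDouble false)) δ)
        (Formula.not (I.toDouble true))))

/-- The set `{ Ind[t̄] : t̄ ∈ Terms_k, depth(Ind[t̄]) ≤ k }` of Bounded-Horizon
instantiations of bound `k`. -/
def BHSet {T : Sig} (k : ℕ) (Ind : Formula T) : Set (Formula T) :=
  { χ | BInst k Ind χ ∧ χ.tDepth ≤ k }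

/-- `I` is provably inductive w.r.t. `δ` with Bounded-Horizon of bound `k`:
the set of instantiations of `Ind = Sk(I) ∧ Sk(δ) ∧ Sk(¬I')` by tuples of ground terms
of depth at most `k` is unsatisfiable. -/
def ProvablyInductiveBH (I : Formula S) (δ : Formula S.double) (k : ℕ) : Prop :=
  ¬ SetSatisfiable (BHSet k (IndOf I δ))

def Formula.allList : List ℕ → Formula S → Formula S
  | [], φ => φ
  | x :: xs, φ => .all x (Formula.allList xs φ)

def Formula.exList : List ℕ → Formula S → Formula S
  | [], φ => φ
  | x :: xs, φ => .ex x (Formula.exList xs φ)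

/-- The existential prefix of a formula: the list of outermost existentially
quantified variables, together with the matrix. -/
def Formula.exPrefix : Formula S → List ℕ × Formula S
  | .ex x φ => ((x :: (Formula.exPrefix φ).1 : List ℕ), (Formula.exPrefix φ).2)
  | φ => ([], φ)

def Term.funcSyms : Term S → Set S.Func
  | .var _ => ∅
  | .app f ts => insert f (⋃ i, Term.funcSyms (ts i))

def Formula.funcSyms : Formula S → Set S.Func
  | .rel _ ts => ⋃ i, (ts i).funcSyms
  | .eq t u => t.funcSyms ∪ u.funcSyms
  | .fls => ∅
  | .not φ => Formula.funcSyms φ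
  | .and φ ψ => Formula.funcSyms φ ∪ Formula.funcSyms ψ
  | .or φ ψ => Formula.funcSyms φ ∪ Formula.funcSyms ψ
  | .all _ φ => Formula.funcSyms φ
  | .ex _ φ => Formula.funcSyms φ

/-- The set of constants (0-ary function symbols) occurring in a formula. -/
def Formula.constSyms (φ : Formula S) : Set S.Func :=
  { f ∈ φ.funcSyms | S.funcArity f = 0 }

/-- The closed term consisting of the constant symbol `f`. -/
def constTerm (f : S.Func) (h : S.funcArity f = 0) : Term S :=
  .app f fun i => (Fin.cast h i).elim0

/-- `t` is (the term of) a constant symbol belonging to `Cs`. -/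
def IsConstTermOf (Cs : Set S.Func) (t : Term S) : Prop :=
  ∃ (f : S.Func) (h : S.funcArity f = 0), f ∈ Cs ∧ t = constTerm f h

/-- The number of existential quantifiers of a formula. -/
def Formula.countEx : Formula S → ℕ
  | .ex _ φ => Formula.countEx φ + 1
  | .all _ φ => Formula.countEx φ
  | .not φ => Formula.countEx φ
  | .and φ ψ => Formula.countEx φ + Formula.countEx ψ
  | .or φ ψ => Formula.countEx φ + Formula.countEx ψ
  | .rel _ _ => 0
  | .eq _ _ => 0
  | .fls => 0

def Term.unAddRel1 {a : ℕ} : Term (S.addRel a) → Term S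
  | .var n => .var n
  | .app f ts => .app f fun i => Term.unAddRel1 (ts i)

def Term.unAddRelD {a : ℕ} : Term ((S.addRel a).double) → Term S.double
  | .var n => .var n
  | .app f ts => .app f fun i => Term.unAddRelD (ts i)

def Term.unAddRelDsk {a : ℕ} : Term (((S.addRel a).double).skolemize) → Term (S.double.skolemize)
  | .var n => .var n
  | .app f ts => .app f fun i => Term.unAddRelDsk (ts i)

def Term.inclSk : Term S → Term S.skolemize
  | .var n => .var n
  | .app f ts => .app (Sum.inl f) fun i => Term.inclSk (ts i)

def Formula.inclSk : Formula S → Formula S.skolemize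
  | .rel r ts => .rel r fun i => (ts i).inclSk
  | .eq t u => .eq t.inclSk u.inclSk
  | .fls => .fls
  | .not φ => .not (Formula.inclSk φ)
  | .and φ ψ => .and (Formula.inclSk φ) (Formula.inclSk ψ)
  | .or φ ψ => .or (Formula.inclSk φ) (Formula.inclSk ψ)
  | .all x φ => .all x (Formula.inclSk φ)
  | .ex x φ => .ex x (Formula.inclSk φ)

def Term.inclAddRel {a : ℕ} : Term S → Term (S.addRel a)
  | .var n => .var n
  | .app f ts => .app f fun i => Term.inclAddRel (ts i)

def Formula.inclAddRel {a : ℕ} : Formula S → Formula (S.addRel a)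
  | .rel r ts => .rel (some r) fun i => (ts i).inclAddRel
  | .eq t u => .eq t.inclAddRel u.inclAddRel
  | .fls => .fls
  | .not φ => .not (Formula.inclAddRel φ)
  | .and φ ψ => .and (Formula.inclAddRel φ) (Formula.inclAddRel ψ)
  | .or φ ψ => .or (Formula.inclAddRel φ) (Formula.inclAddRel ψ)
  | .all x φ => .all x (Formula.inclAddRel φ)
  | .ex x φ => .ex x (Formula.inclAddRel φ)

def Term.inclAddRelD {a : ℕ} : Term S.double → Term ((S.addRel a).double)
  | .var n => .var n
  | .app f ts => .app f fun i => Term.inclAddRelD (ts i)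

def Formula.inclAddRelD {a : ℕ} : Formula S.double → Formula ((S.addRel a).double)
  | .rel r ts => .rel (some r.1, r.2) fun i => (ts i).inclAddRelD
  | .eq t u => .eq t.inclAddRelD u.inclAddRelD
  | .fls => .fls
  | .not φ => .not (Formula.inclAddRelD φ)
  | .and φ ψ => .and (Formula.inclAddRelD φ) (Formula.inclAddRelD ψ)
  | .or φ ψ => .or (Formula.inclAddRelD φ) (Formula.inclAddRelD ψ)
  | .all x φ => .all x (Formula.inclAddRelD φ)
  | .ex x φ => .ex x (Formula.inclAddRelD φ)

def Term.inclSkD : Term S.double → Term ((S.skolemize).double)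
  | .var n => .var n
  | .app f ts => .app (Sum.inl f.1, f.2) fun i => Term.inclSkD (ts i)

def Formula.inclSkD : Formula S.double → Formula ((S.skolemize).double)
  | .rel r ts => .rel r fun i => (ts i).inclSkD
  | .eq t u => .eq t.inclSkD u.inclSkD
  | .fls => .fls
  | .not φ => .not (Formula.inclSkD φ)
  | .and φ ψ => .and (Formula.inclSkD φ) (Formula.inclSkD ψ)
  | .or φ ψ => .or (Formula.inclSkD φ) (Formula.inclSkD ψ)
  | .all x φ => .all x (Formula.inclSkD φ)
  | .ex x φ => .ex x (Formula.inclSkD φ)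

def Term.toDoubleSk (b : Bool) : Term S.skolemize → Term (S.double.skolemize)
  | .var n => .var n
  | .app (Sum.inl f) ts => .app (Sum.inl (f, b)) fun i => Term.toDoubleSk b (ts i)
  | .app (Sum.inr s) ts => .app (Sum.inr s) fun i => Term.toDoubleSk b (ts i)

/-- Replace every symbol of `Σ` in a formula over the Skolem-extension of `Σ` by the
copy indicated by `b` (Skolem symbols are shared between the two copies). -/
def Formula.toDoubleSk (b : Bool) : Formula S.skolemize → Formula (S.double.skolemize)
  | .rel r ts => .rel (r, b) fun i => (ts i).toDoubleSk b
  | .eq t u => .eq (t.toDoubleSk b) (u.toDoubleSk b)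
  | .fls => .fls
  | .not φ => .not (Formula.toDoubleSk b φ)
  | .and φ ψ => .and (Formula.toDoubleSk b φ) (Formula.toDoubleSk b ψ)
  | .or φ ψ => .or (Formula.toDoubleSk b φ) (Formula.toDoubleSk b ψ)
  | .all x φ => .all x (Formula.toDoubleSk b φ)
  | .ex x φ => .ex x (Formula.toDoubleSk b φ)

/-- `χ[ψ/r, ψ'/r']`: replace every atom of `r` (resp. `r'`) in the two-vocabulary
formula `χ` over `Σ̂ ⊎ Σ̂'` by `ψ` (resp. `ψ'`), whose free variables `0, …, a-1`
are substituted by the arguments of the atom. -/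
def Formula.substRD {a : ℕ} (ψ : Formula S) :
    Formula ((S.addRel a).double) → Formula S.double
  | .rel ⟨none, b⟩ ts => (ψ.toDouble b).substEnv fun n =>
      if h : n < a then Term.unAddRelD (ts ⟨n, h⟩) else .var n
  | .rel ⟨some r₀, b⟩ ts => .rel (r₀, b) fun i => Term.unAddRelD (ts i)
  | .eq t u => .eq t.unAddRelD u.unAddRelD
  | .fls => .fls
  | .not φ => .not (Formula.substRD ψ φ)
  | .and φ χ => .and (Formula.substRD ψ φ) (Formula.substRD ψ χ)
  | .or φ χ => .or (Formula.substRD ψ φ) (Formula.substRD ψ χ)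
  | .all x φ => .all x (Formula.substRD ψ φ)
  | .ex x φ => .ex x (Formula.substRD ψ φ)

/-- `χ[ψ/r]`: replace every atom of `r` in the (one-vocabulary) formula `χ` over `Σ̂`
by `ψ`, whose free variables `0, …, a-1` are substituted by the arguments of the atom. -/
def Formula.substR1 {a : ℕ} (ψ : Formula S) : Formula (S.addRel a) → Formula S
  | .rel none ts => ψ.substEnv fun n =>
      if h : n < a then Term.unAddRel1 (ts ⟨n, h⟩) else .var n
  | .rel (some r₀) ts => .rel r₀ fun i => Term.unAddRel1 (ts i)
  | .eq t u => .eq t.unAddRel1 u.unAddRel1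
  | .fls => .fls
  | .not φ => .not (Formula.substR1 ψ φ)
  | .and φ χ => .and (Formula.substR1 ψ φ) (Formula.substR1 ψ χ)
  | .or φ χ => .or (Formula.substR1 ψ φ) (Formula.substR1 ψ χ)
  | .all x φ => .all x (Formula.substR1 ψ φ)
  | .ex x φ => .ex x (Formula.substR1 ψ φ)

/-- `χ[ψ/r, ψ'/r']` for formulas over the Skolem-extension of `Σ̂ ⊎ Σ̂'`. -/
def Formula.substRDsk {a : ℕ} (ψ : Formula S) :
    Formula (((S.addRel a).double).skolemize) → Formula (S.double.skolemize)
  | .rel ⟨none, b⟩ ts => ((ψ.toDouble b).inclSk).substEnv fun n =>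
      if h : n < a then Term.unAddRelDsk (ts ⟨n, h⟩) else .var n
  | .rel ⟨some r₀, b⟩ ts => .rel (r₀, b) fun i => Term.unAddRelDsk (ts i)
  | .eq t u => .eq t.unAddRelDsk u.unAddRelDsk
  | .fls => .fls
  | .not φ => .not (Formula.substRDsk ψ φ)
  | .and φ χ => .and (Formula.substRDsk ψ φ) (Formula.substRDsk ψ χ)
  | .or φ χ => .or (Formula.substRDsk ψ φ) (Formula.substRDsk ψ χ)
  | .all x φ => .all x (Formula.substRDsk ψ φ)
  | .ex x φ => .ex x (Formula.substRDsk ψ φ)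

/-- `rOcc b φ` holds iff every occurrence of the fresh relation symbol `r` in `φ` has
polarity `b` (`true` = positive, i.e. under an even number of negations in negation
normal form; `false` = negative). -/
def Formula.rOcc {a : ℕ} : Bool → Formula (S.addRel a) → Prop
  | b, .rel none _ => b = true
  | _, .rel (some _) _ => True
  | _, .eq _ _ => True
  | _, .fls => True
  | b, .not φ => Formula.rOcc (!b) φ
  | b, .and φ ψ => Formula.rOcc b φ ∧ Formula.rOcc b ψ
  | b, .or φ ψ => Formula.rOcc b φ ∧ Formula.rOcc b ψ
  | b, .all _ φ => Formula.rOcc b φ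
  | b, .ex _ φ => Formula.rOcc b φ

/-- The relation symbol `r` occurs only positively in `φ`. -/
def Formula.OnlyPosR {a : ℕ} (φ : Formula (S.addRel a)) : Prop := Formula.rOcc true φ

/-- The relation symbol `r` occurs only negatively in `φ`. -/
def Formula.OnlyNegR {a : ℕ} (φ : Formula (S.addRel a)) : Prop := Formula.rOcc false φ

/-- `δ̂` is a sound instrumentation for `δ` and `ψ`:  `δ → δ̂[ψ/r, ψ'/r']` is valid. -/
def SoundInstr {a : ℕ} (δ : Formula S.double) (ψ : Formula S)
    (δhat : Formula ((S.addRel a).double)) : Prop :=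
  Valid (Formula.imp δ (Formula.substRD ψ δhat))

/-- `δ̂` is a sound instrumentation without additional existentials for `δ` and `ψ`:
there is an existential naming `η`, mapping each existentially quantified variable of
`δ̂ = ∃z₁…z_m. φ` to a constant of `Sk(δ)` or of `δ̂`, such that
`Sk(δ) → η(δ̂)[ψ/r, ψ'/r']` is valid. -/
def SoundInstrNoExists {a : ℕ} (δ : Formula S.double) (ψ : Formula S)
    (δhat : Formula ((S.addRel a).double)) : Prop :=
  ∃ η : ℕ → Term (((S.addRel a).double).skolemize),
    (∀ z ∈ δhat.exPrefix.1,
      IsConstTermOf (S := ((S.addRel a).double).skolemize)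
        (((Formula.sk δ).constSyms : Set ((((S.addRel a).double).skolemize).Func)) ∪
          (Formula.inclSk δhat).constSyms)
        (η z)) ∧
    (∀ z, z ∉ δhat.exPrefix.1 → η z = .var z) ∧
    Valid (Formula.imp (Formula.sk δ)
      (Formula.substRDsk ψ ((Formula.inclSk δhat.exPrefix.2).substEnv η)))

/-- The interpretation in `A` of the constant symbol `f` (over a relational signature). -/
def constVal (hrel : S.Relational) (A : Struc S) (f : S.Func) : A.Dom :=
  A.interpFunc f fun i => (Fin.cast (hrel f) i).elim0

/-- The substructure of `A` whose domain is the set of interpretations of the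
constant symbols. -/
def constSub (hrel : S.Relational) (A : Struc S) [Nonempty S.Func] : Struc S where
  Dom := ↥(Set.range (constVal hrel A))
  dom_nonempty := (Set.range_nonempty _).to_subtype
  interpFunc := fun f _ => ⟨constVal hrel A f, Set.mem_range_self f⟩
  interpRel := fun r args => A.interpRel r fun i => (args i).1

end BH

/-!
Take a model `A` of `∃x₁…xₙ ∀ȳ. θ` and witnesses `d₁, …, dₙ` for the existential
block. The substructure of `A` on the values of the constants of the sentence together
with the `dᵢ` (a single arbitrary point if this set is empty) is still a model: the `dᵢ`
still witness the existentials, and universal formulas are preserved in substructures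
containing the interpretations of their constants.
-/

namespace BH

variable {S : Sig}

lemma _root_.Set.Finite.exists_nonempty_superset_ncard_le {α : Type*} [Nonempty α] {s : Set α}
    (hs : s.Finite) : ∃ t, s ⊆ t ∧ t.Nonempty ∧ t.Finite ∧ t.ncard ≤ max s.ncard 1 := by
  rcases s.eq_empty_or_nonempty with rfl | hne
  · obtain ⟨a⟩ := ‹Nonempty α›
    exact ⟨{a}, Set.empty_subset _, Set.singleton_nonempty a, Set.finite_singleton a,
      (Set.ncard_singleton a).trans_le (le_max_right _ _)⟩
  · exact ⟨s, subset_rfl, hne, hs, le_max_left _ _⟩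

lemma Term.eval_congr {A : Struc S} {v v' : ℕ → A.Dom} :
    ∀ t : Term S, (∀ n ∈ t.fvars, v n = v' n) → t.eval A v = t.eval A v'
  | .var n, h => h n rfl
  | .app f ts, h => congrArg (A.interpFunc f) <| funext fun i =>
      Term.eval_congr (ts i) fun n hn => h n (Set.mem_iUnion.mpr ⟨i, hn⟩)

lemma Formula.realize_congr {A : Struc S} :
    ∀ (φ : Formula S) {v v' : ℕ → A.Dom}, (∀ n ∈ φ.fvars, v n = v' n) →
      (φ.Realize A v ↔ φ.Realize A v')
  | .rel r ts, v, v', h => by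
      simp only [Formula.Realize]
      rw [funext fun i => Term.eval_congr (ts i) fun n hn =>
        h n (Set.mem_iUnion.mpr ⟨i, hn⟩)]
  | .eq t u, v, v', h => by
      simp only [Formula.Realize]
      rw [Term.eval_congr t fun n hn => h n (Or.inl hn),
        Term.eval_congr u fun n hn => h n (Or.inr hn)]
  | .fls, v, v', h => Iff.rfl
  | .not φ, v, v', h => not_congr (Formula.realize_congr φ h)
  | .and φ ψ, v, v', h => and_congr (Formula.realize_congr φ fun n hn => h n (Or.inl hn))
      (Formula.realize_congr ψ fun n hn => h n (Or.inr hn))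
  | .or φ ψ, v, v', h => or_congr (Formula.realize_congr φ fun n hn => h n (Or.inl hn))
      (Formula.realize_congr ψ fun n hn => h n (Or.inr hn))
  | .all x φ, v, v', h => forall_congr' fun d => Formula.realize_congr φ fun n hn => by
      by_cases hx : n = x
      · simp [hx]
      · simpa [Function.update_of_ne hx] using h n ⟨hn, hx⟩
  | .ex x φ, v, v', h => exists_congr fun d => Formula.realize_congr φ fun n hn => by
      by_cases hx : n = x
      · simp [hx]
      · simpa [Function.update_of_ne hx] using h n ⟨hn, hx⟩

lemma Term.funcSyms_finite : ∀ t : Term S, t.funcSyms.Finite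
  | .var _ => Set.finite_empty
  | .app f ts => (Set.finite_iUnion fun i => Term.funcSyms_finite (ts i)).insert f

lemma Formula.funcSyms_finite : ∀ φ : Formula S, φ.funcSyms.Finite
  | .rel _ ts => Set.finite_iUnion fun i => Term.funcSyms_finite (ts i)
  | .eq t u => (Term.funcSyms_finite t).union (Term.funcSyms_finite u)
  | .fls => Set.finite_empty
  | .not φ => Formula.funcSyms_finite φ
  | .and φ ψ => (Formula.funcSyms_finite φ).union (Formula.funcSyms_finite ψ)
  | .or φ ψ => (Formula.funcSyms_finite φ).union (Formula.funcSyms_finite ψ)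
  | .all _ φ => Formula.funcSyms_finite φ
  | .ex _ φ => Formula.funcSyms_finite φ

lemma Formula.constSyms_eq_funcSyms (hrel : S.Relational) (φ : Formula S) :
    φ.constSyms = φ.funcSyms :=
  Set.sep_eq_self_iff_mem_true.mpr fun f _ => hrel f

namespace Struc

def ClosedUnder (A : Struc S) (D : Set A.Dom) (f : S.Func) : Prop :=
  ∀ args : Fin (S.funcArity f) → D, A.interpFunc f (Subtype.val ∘ args) ∈ D

/-- Symbols under which `D` is not closed are reinterpreted arbitrarily; only formulas
whose symbols `D` is closed under are evaluated here as in `A`. -/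
noncomputable abbrev restrict (A : Struc S) (D : Set A.Dom) [Nonempty D] : Struc S where
  Dom := D
  interpFunc f args :=
    open Classical in
    if h : A.interpFunc f (Subtype.val ∘ args) ∈ D then ⟨_, h⟩ else Classical.arbitrary D
  interpRel r args := A.interpRel r (Subtype.val ∘ args)

lemma closedUnder_of_constVal_mem (hrel : S.Relational) {A : Struc S} {D : Set A.Dom}
    {f : S.Func} (hf : constVal hrel A f ∈ D) : A.ClosedUnder D f := fun args => by
  rwa [show Subtype.val ∘ args = fun i => (Fin.cast (hrel f) i).elim0 from
    funext fun i => (Fin.cast (hrel f) i).elim0]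

end Struc

variable {A : Struc S} {D : Set A.Dom} [Nonempty D]

lemma Term.eval_restrict (w : ℕ → D) :
    ∀ t : Term S, (∀ f ∈ t.funcSyms, A.ClosedUnder D f) →
      (t.eval (A.restrict D) w : A.Dom) = t.eval A (Subtype.val ∘ w)
  | .var n, _ => rfl
  | .app f ts, h => by
      have hargs : Subtype.val ∘ (fun i => (ts i).eval (A.restrict D) w) =
          fun i => (ts i).eval A (Subtype.val ∘ w) :=
        funext fun i => Term.eval_restrict w (ts i) fun g hg =>
          h g (Set.mem_insert_of_mem f (Set.mem_iUnion.mpr ⟨i, hg⟩))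
      have hf := h f (Set.mem_insert f _)
      change ((A.restrict D).interpFunc f _ : A.Dom) = A.interpFunc f _
      simp only [Struc.restrict, dif_pos (hf _), hargs]

lemma Formula.IsQF.realize_restrict {φ : Formula S} (hφ : φ.IsQF)
    (hD : ∀ f ∈ φ.funcSyms, A.ClosedUnder D f) (w : ℕ → D) :
    φ.Realize (A.restrict D) w ↔ φ.Realize A (Subtype.val ∘ w) := by
  induction hφ with
  | rel r ts =>
      refine Iff.of_eq (congrArg (A.interpRel r) (funext fun i => ?_))
      exact Term.eval_restrict w (ts i) fun f hf => hD f (Set.mem_iUnion.mpr ⟨i, hf⟩)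
  | eq t u =>
      simp only [Formula.Realize]
      rw [← Subtype.coe_inj]
      rw [Term.eval_restrict w t fun f hf => hD f (Or.inl hf),
        Term.eval_restrict w u fun f hf => hD f (Or.inr hf)]
  | fls => exact Iff.rfl
  | not _ ih => exact not_congr (ih hD)
  | and _ _ ih₁ ih₂ =>
      exact and_congr (ih₁ fun f hf => hD f (Or.inl hf)) (ih₂ fun f hf => hD f (Or.inr hf))
  | or _ _ ih₁ ih₂ =>
      exact or_congr (ih₁ fun f hf => hD f (Or.inl hf)) (ih₂ fun f hf => hD f (Or.inr hf))

lemma Formula.IsUniversal.realize_restrict {φ : Formula S} (hφ : φ.IsUniversal)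
    (hD : ∀ f ∈ φ.funcSyms, A.ClosedUnder D f) {w : ℕ → D}
    (hw : φ.Realize A (Subtype.val ∘ w)) : φ.Realize (A.restrict D) w := by
  induction hφ generalizing w with
  | of_qf hqf => exact (hqf.realize_restrict hD w).mpr hw
  | all x _ ih =>
      intro d
      exact ih hD (by rw [Function.comp_update]; exact hw d)

lemma Formula.IsEA.exists_finset_realize_restrict {φ : Formula S} (hφ : φ.IsEA)
    {v : ℕ → A.Dom} (hv : φ.Realize A v) :
    ∃ W : Finset A.Dom, W.card ≤ φ.countEx ∧
      ∀ (D : Set A.Dom) [Nonempty D], ↑W ⊆ D →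
        (∀ f ∈ φ.funcSyms, A.ClosedUnder D f) → ∀ w : ℕ → D,
          (∀ n ∈ φ.fvars, (w n : A.Dom) = v n) → φ.Realize (A.restrict D) w := by
  classical
  induction hφ generalizing v with
  | of_universal hψ =>
      exact ⟨∅, Nat.zero_le _, fun D _ _ hD w hw =>
        hψ.realize_restrict hD ((Formula.realize_congr _ hw).mpr hv)⟩
  | ex x _ ih =>
      obtain ⟨d, hd⟩ := hv
      obtain ⟨W, hcard, hW⟩ := ih hd
      refine ⟨insert d W, (Finset.card_insert_le d W).trans (Nat.succ_le_succ hcard), ?_⟩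
      intro D _ hWD hD w hw
      have hdD : d ∈ D := hWD (Finset.mem_insert_self d W)
      refine ⟨⟨d, hdD⟩, hW D (fun a ha => hWD (Finset.mem_insert_of_mem ha)) hD _ ?_⟩
      intro n hn
      by_cases hx : n = x
      · simp [hx]
      · simpa [Function.update_of_ne hx] using hw n ⟨hn, hx⟩

/-- the small model property of EPR. -/
theorem statement_14 (S : Sig) (hrel : S.Relational)
    (φ : Formula S) (hsent : φ.IsSentence) (hEA : φ.IsEA)
    (hsat : Satisfiable φ) :
    ∃ B : Struc S, (∀ v, φ.Realize B v) ∧ Finite B.Dom ∧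
      1 ≤ Nat.card B.Dom ∧
      Nat.card B.Dom ≤ max (Nat.card ↥(φ.constSyms) + φ.countEx) 1 := by
  obtain ⟨A, v, hv⟩ := hsat
  obtain ⟨W, hWcard, hW⟩ := hEA.exists_finset_realize_restrict hv
  set C := constVal hrel A '' φ.funcSyms
  have hCfin : C.Finite := (Formula.funcSyms_finite φ).image _
  obtain ⟨D, hWCD, hDne, hDfin, hDcard⟩ :=
    (W.finite_toSet.union hCfin).exists_nonempty_superset_ncard_le
  have : Nonempty D := hDne.to_subtype
  have : Finite D := hDfin.to_subtype
  have hcard : (↑W ∪ C).ncard ≤ Nat.card ↥(φ.constSyms) + φ.countEx := by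
    rw [Nat.card_coe_set_eq, φ.constSyms_eq_funcSyms hrel, add_comm]
    exact (Set.ncard_union_le _ _).trans (add_le_add (by simpa using hWcard)
      (Set.ncard_image_le (Formula.funcSyms_finite φ)))
  refine ⟨A.restrict D, fun w => ?_, ‹Finite D›, ?_, ?_⟩
  · exact hW D (Set.subset_union_left.trans hWCD)
      (fun f hf => Struc.closedUnder_of_constVal_mem hrel (hWCD (Or.inr ⟨f, hf, rfl⟩))) w
      (fun n hn => absurd (hsent ▸ hn) (Set.notMem_empty n))
  · exact Nat.card_pos (α := D)
  · exact (Nat.card_coe_set_eq D).trans_le (hDcard.trans (max_le_max_right 1 hcard))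

end BH
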